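/- arXiv:1509.00220 — 6 statements merged into one kernel-verified Lean document; each statement's English description precedes it below -/
import Mathlib

section
/- Let n ≥ 3 and let r be a positive integer with 1 ≤ r ≤ ⌊n/2⌋ − 1. Then the curling number of the r-th power of the path graph P_n equals n − 2r. -/
/-! In `P_n^r` vertex `i` is adjacent exactly to the `j ≠ i` with `|i - j| ≤ r`, so its degree is
`min (i + r) (n - 1) - max (i - r) 0`. The `n - 2r` central vertices `r ≤ i ≤ n - 1 - r` all have
degree `2r`; every other vertex has degree below `2r`, strictly increasing in its distance from the
nearer end of the path, so each such degree is shared by at most two vertices, and `2 ≤ n - 2r`. -/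

open Finset

/-- The degree of a vertex `v` in a simple graph `G`: the number of its neighbours. -/
noncomputable def gdeg {V : Type*} (G : SimpleGraph V) (v : V) : ℕ :=
  (G.neighborSet v).ncard

/-- The curling number of a finite simple graph: the maximum number of vertices
of `G` sharing a common degree. -/
noncomputable def curlingNumber {V : Type*} [Fintype V] (G : SimpleGraph V) : ℕ :=
  Finset.univ.sup fun v => (Finset.univ.filter fun u => gdeg G u = gdeg G v).card

/-- The `r`-th power of a simple graph `G`: same vertex set, two distinct vertices
adjacent iff their distance in `G` is (finite and) at most `r`. -/
def SimpleGraph.power {V : Type*} (G : SimpleGraph V) (r : ℕ) : SimpleGraph V where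
  Adj u v := u ≠ v ∧ G.Reachable u v ∧ G.dist u v ≤ r
  symm := by
    constructor
    rintro u v ⟨h1, h2, h3⟩
    exact ⟨h1.symm, h2.symm, by rwa [SimpleGraph.dist_comm]⟩
  loopless := by
    constructor
    rintro v ⟨h1, -, -⟩
    exact h1 rfl

namespace SimpleGraph

variable {n : ℕ}

theorem pathGraph_natDist_le_length {u v : Fin n} (w : (pathGraph n).Walk u v) :
    Nat.dist u v ≤ w.length := by
  induction w with
  | nil => simp
  | @cons u c v h p ih =>
    rw [pathGraph_adj] at h
    simp only [Walk.length_cons, Nat.dist] at ih ⊢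
    omega

theorem pathGraph_exists_walk_length_eq_of_val_eq_add (u : Fin n) :
    ∀ (k : ℕ) (v : Fin n), v.val = u.val + k → ∃ w : (pathGraph n).Walk u v, w.length = k
  | 0, v, hv => ⟨Walk.nil.copy rfl (Fin.ext hv.symm), by simp⟩
  | k + 1, v, hv => by
    obtain ⟨w, hw⟩ :=
      pathGraph_exists_walk_length_eq_of_val_eq_add u k ⟨u + k, by omega⟩ rfl
    exact ⟨w.concat (pathGraph_adj.mpr (.inl (by simp only; omega))), by simp [hw]⟩

theorem pathGraph_exists_walk_length_eq_natDist (u v : Fin n) :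
    ∃ w : (pathGraph n).Walk u v, w.length = Nat.dist u v := by
  rcases le_total u v with huv | hvu
  · exact pathGraph_exists_walk_length_eq_of_val_eq_add u _ v
      (by simp only [Nat.dist, Fin.le_def] at huv ⊢; omega)
  · obtain ⟨w, hw⟩ := pathGraph_exists_walk_length_eq_of_val_eq_add v (Nat.dist u v) u
      (by simp only [Nat.dist, Fin.le_def] at hvu ⊢; omega)
    exact ⟨w.reverse, by rw [Walk.length_reverse, hw]⟩

theorem pathGraph_dist (u v : Fin n) : (pathGraph n).dist u v = Nat.dist u v := by
  obtain ⟨w, hw⟩ := (pathGraph_preconnected n u v).exists_walk_length_eq_dist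
  obtain ⟨w', hw'⟩ := pathGraph_exists_walk_length_eq_natDist u v
  exact le_antisymm (hw' ▸ dist_le w') (hw ▸ pathGraph_natDist_le_length w)

theorem pathGraph_power_adj {r : ℕ} {u v : Fin n} :
    ((pathGraph n).power r).Adj u v ↔ u ≠ v ∧ Nat.dist u v ≤ r := by
  simp [power, pathGraph_preconnected n u v, pathGraph_dist]

end SimpleGraph

/-- Truncated subtraction makes `i - r` clip at the left end `0` of the path. -/
def pathPowerDegree (n r i : ℕ) : ℕ := min (i + r) (n - 1) - (i - r)

section PathPower

open SimpleGraph

variable {n r : ℕ}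

theorem gdeg_pathGraph_power (v : Fin n) :
    gdeg ((pathGraph n).power r) v = pathPowerDegree n r v := by
  have hv := v.isLt
  have hnbr : ((pathGraph n).power r).neighborSet v =
      ↑((Icc (⟨v - r, by omega⟩ : Fin n) ⟨min (v + r) (n - 1), by omega⟩).erase v) := by
    ext u
    simp only [mem_neighborSet, pathGraph_power_adj, coe_erase, coe_Icc, Set.mem_sdiff,
      Set.mem_Icc, Set.mem_singleton_iff, Fin.le_def, Nat.dist]
    omega
  rw [gdeg, hnbr, Set.ncard_coe_finset, card_erase_of_mem (by simp [Fin.le_def]; omega),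
    Fin.card_Icc, pathPowerDegree]
  dsimp only
  omega

theorem pathPowerDegree_eq_two_mul_iff {i : ℕ} (hi : i < n) :
    pathPowerDegree n r i = 2 * r ↔ r ≤ i ∧ i + r < n := by
  unfold pathPowerDegree
  omega

theorem eq_or_eq_of_pathPowerDegree_ne {i : ℕ} (hr : 2 * r < n) (hi : i < n)
    (hd : pathPowerDegree n r i ≠ 2 * r) :
    i = pathPowerDegree n r i - r ∨ i = n - 1 + r - pathPowerDegree n r i := by
  unfold pathPowerDegree at *
  omega

theorem card_filter_gdeg_pathGraph_power_eq_of_central {v : Fin n} (hv : r ≤ v ∧ v + r < n) :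
    #{u | gdeg ((pathGraph n).power r) u = gdeg ((pathGraph n).power r) v} = n - 2 * r := by
  have hclass : ({u | gdeg ((pathGraph n).power r) u = gdeg ((pathGraph n).power r) v} :
      Finset (Fin n)) = Icc ⟨r, by omega⟩ ⟨n - 1 - r, by omega⟩ := by
    ext u
    simp only [mem_filter, mem_univ, true_and, mem_Icc, Fin.le_def, gdeg_pathGraph_power,
      (pathPowerDegree_eq_two_mul_iff v.isLt).mpr hv, pathPowerDegree_eq_two_mul_iff u.isLt]
    omega
  rw [hclass, Fin.card_Icc]
  dsimp only
  omega

theorem card_filter_gdeg_pathGraph_power_eq_le_two (hr : 2 * r < n) {v : Fin n}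
    (hv : ¬(r ≤ v ∧ v + r < n)) :
    #{u | gdeg ((pathGraph n).power r) u = gdeg ((pathGraph n).power r) v} ≤ 2 := by
  set d := pathPowerDegree n r v
  have hd : d ≠ 2 * r := by rwa [Ne, pathPowerDegree_eq_two_mul_iff v.isLt]
  calc #{u | gdeg ((pathGraph n).power r) u = gdeg ((pathGraph n).power r) v}
      ≤ #({d - r, n - 1 + r - d} : Finset ℕ) := by
        refine card_le_card_of_injOn Fin.val (fun u hu => ?_) Fin.val_injective.injOn
        simp only [coe_filter, mem_univ, true_and, Set.mem_ofPred_eq, gdeg_pathGraph_power] at hu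
        have hu' := eq_or_eq_of_pathPowerDegree_ne hr u.isLt (hu ▸ hd)
        rw [hu] at hu'
        simpa using hu'
    _ ≤ 2 := card_le_two

end PathPower

theorem curlingNumber_pathGraph_power_of_le_general (n r : ℕ) (hn : 3 ≤ n)
    (hr2 : r ≤ n / 2 - 1) :
    curlingNumber ((SimpleGraph.pathGraph n).power r) = n - 2 * r := by
  have hr : 2 * r + 2 ≤ n := by omega
  rw [curlingNumber]
  refine le_antisymm (Finset.sup_le fun v _ => ?_) ?_
  · by_cases hv : r ≤ v ∧ v + r < n
    · exact (card_filter_gdeg_pathGraph_power_eq_of_central hv).le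
    · exact (card_filter_gdeg_pathGraph_power_eq_le_two (by omega) hv).trans (by omega)
  · exact le_sup_of_le (mem_univ _)
      (card_filter_gdeg_pathGraph_power_eq_of_central (v := ⟨r, by omega⟩)
        ⟨le_rfl, by dsimp only; omega⟩).ge

/-- For `n ≥ 3` and `1 ≤ r ≤ ⌊n/2⌋ - 1`, the curling number of the `r`-th
power of the path graph `P_n` is `n - 2r`. -/
theorem curlingNumber_pathGraph_power_of_le (n r : ℕ) (hn : 3 ≤ n)
    (hr1 : 1 ≤ r) (hr2 : r ≤ n / 2 - 1) :
    curlingNumber ((SimpleGraph.pathGraph n).power r) = n - 2 * r :=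
  curlingNumber_pathGraph_power_of_le_general n r hn hr2
end

section
/- Let n ≥ 3 and let r = ⌊n/2⌋. Then the curling number of the r-th power of the path graph P_n equals 2. -/
open Finset

/-!
In `P_n^r` the neighbours of `i` are the `j ≠ i` with `|i - j| ≤ r`, so
`deg i = min i r + min (n - 1 - i) r`. For `r = ⌊n/2⌋` the smaller of `i` and `n - 1 - i` is at
most `r` and the larger at least `r`, hence `deg i = min i (n - 1 - i) + r`: a vertex shares its
degree exactly with itself and its mirror image `n - 1 - i`, which for `i = 0` is another vertex.
-/

section CurlingNumber

variable {V : Type*} [Fintype V] (G : SimpleGraph V)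

theorem card_filter_gdeg_eq_le_curlingNumber (v : V) :
    #(univ.filter fun u => gdeg G u = gdeg G v) ≤ curlingNumber G :=
  le_sup (f := fun v => #(univ.filter fun u => gdeg G u = gdeg G v)) (mem_univ v)

theorem curlingNumber_le_iff {k : ℕ} :
    curlingNumber G ≤ k ↔ ∀ v, #(univ.filter fun u => gdeg G u = gdeg G v) ≤ k := by
  simp only [curlingNumber, Finset.sup_le_iff, mem_univ, true_implies]

end CurlingNumber

namespace SimpleGraph

variable {n : ℕ}

theorem pathGraph_exists_walk_length_eq (u v : Fin n) (h : u ≤ v) :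
    ∃ p : (pathGraph n).Walk u v, p.length = v - u := by
  induction hk : (v : ℕ) - u generalizing u with
  | zero =>
    obtain rfl : u = v := Fin.ext (by omega)
    exact ⟨.nil, by simp⟩
  | succ k ih =>
    have hu : (u : ℕ) + 1 < n := by omega
    obtain ⟨p, hp⟩ := ih ⟨u + 1, hu⟩ (Fin.le_iff_val_le_val.2 (by simp only; omega))
      (by simp only; omega)
    exact ⟨.cons (pathGraph_adj.2 (.inl rfl)) p, by simp [hp]⟩

theorem Walk.natDist_le_length {u v : Fin n} (p : (pathGraph n).Walk u v) :
    Nat.dist u v ≤ p.length := by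
  induction p with
  | nil => simp
  | cons h p ih =>
    rw [pathGraph_adj] at h
    simp only [Nat.dist, Walk.length_cons] at *
    omega

theorem image_val_pathGraph_power_neighborSet (r : ℕ) (i : Fin n) :
    Fin.val '' ((pathGraph n).power r).neighborSet i =
      ↑((Icc (i - r) (min (i + r) (n - 1))).erase (i : ℕ)) := by
  ext j
  simp only [Set.mem_image, mem_neighborSet, pathGraph_power_adj, coe_erase, coe_Icc,
    Set.mem_sdiff, Set.mem_Icc, Set.mem_singleton_iff, Nat.dist, ne_eq, Fin.ext_iff]
  constructor
  · rintro ⟨j, ⟨hne, hle⟩, rfl⟩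
    omega
  · rintro ⟨hj, hne⟩
    exact ⟨⟨j, by omega⟩, ⟨Ne.symm hne, by simp only; omega⟩, rfl⟩

theorem gdeg_pathGraph_power (r : ℕ) (i : Fin n) :
    gdeg ((pathGraph n).power r) i = min (i : ℕ) r + min (n - 1 - i) r := by
  rw [gdeg, ← Set.ncard_image_of_injective _ Fin.val_injective,
    image_val_pathGraph_power_neighborSet, Set.ncard_coe_finset,
    card_erase_of_mem (by simp only [mem_Icc]; omega), Nat.card_Icc]
  omega

theorem gdeg_pathGraph_power_half_eq_iff {r : ℕ} (hr : r = n / 2) (i j : Fin n) :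
    gdeg ((pathGraph n).power r) j = gdeg ((pathGraph n).power r) i ↔ j = i ∨ j = i.rev := by
  simp only [gdeg_pathGraph_power, Fin.ext_iff, Fin.val_rev]
  omega

theorem filter_gdeg_pathGraph_power_half_eq {r : ℕ} (hr : r = n / 2) (i : Fin n) :
    univ.filter (fun j => gdeg ((pathGraph n).power r) j = gdeg ((pathGraph n).power r) i) =
      {i, i.rev} := by
  ext j
  simp [gdeg_pathGraph_power_half_eq_iff hr]

end SimpleGraph

/-- For `n ≥ 3` and `r = ⌊n/2⌋`, the curling number of the `r`-th power of
the path graph `P_n` is `2`. -/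
theorem curlingNumber_pathGraph_power_half (n r : ℕ) (hn : 3 ≤ n) (hr : r = n / 2) :
    curlingNumber ((SimpleGraph.pathGraph n).power r) = 2 := by
  refine le_antisymm ((curlingNumber_le_iff _).2 fun i => ?_) ?_
  · rw [SimpleGraph.filter_gdeg_pathGraph_power_half_eq hr]
    exact card_le_two
  · let i : Fin n := ⟨0, by omega⟩
    have hi : i ≠ i.rev := by simp only [i, ne_eq, Fin.ext_iff, Fin.val_rev]; omega
    have h := card_filter_gdeg_eq_le_curlingNumber ((SimpleGraph.pathGraph n).power r) i
    rwa [SimpleGraph.filter_gdeg_pathGraph_power_half_eq hr, card_pair hi] at h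
end

section
/- Let r be a positive integer and let m, n be integers with m ≥ 2r + 1 and n ≥ 2r + 1. Then the compound curling number of the r-th power of the tadpole graph T_{m,n} equals 3^(r−1) · (m + n − 2(2r − 1)). -/
open Finset

/-- The compound curling number of a finite simple graph: the product, over all
values `d` occurring as a vertex degree of `G`, of the number of vertices of degree `d`. -/
noncomputable def compoundCurlingNumber {V : Type*} [Fintype V] (G : SimpleGraph V) : ℕ :=
  ∏ d ∈ Finset.univ.image (gdeg G), (Finset.univ.filter fun u => gdeg G u = d).card

/-- The tadpole graph `T_{m,n}`: a cycle on `m` vertices and a path on `n` vertices,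
joined by a bridge from vertex `0` of the cycle to the end vertex `0` of the path. -/
def tadpoleGraph (m n : ℕ) : SimpleGraph (Fin m ⊕ Fin n) where
  Adj u v :=
    match u, v with
    | Sum.inl i, Sum.inl j => (SimpleGraph.cycleGraph m).Adj i j
    | Sum.inr i, Sum.inr j => (SimpleGraph.pathGraph n).Adj i j
    | Sum.inl i, Sum.inr j => (i : ℕ) = 0 ∧ (j : ℕ) = 0
    | Sum.inr i, Sum.inl j => (i : ℕ) = 0 ∧ (j : ℕ) = 0
  symm := by
    constructor
    rintro (i | i) (j | j) h
    · exact h.symm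
    · exact ⟨h.2, h.1⟩
    · exact ⟨h.2, h.1⟩
    · exact h.symm
  loopless := by
    constructor
    rintro (i | i) h
    · exact h.ne rfl
    · exact h.ne rfl

/-! The distance in `T_{m,n}` has an explicit form `tadpoleDist`: cyclic distance on the cycle,
distance along the path, and through the bridge between them. It is the graph distance because it
is 1-Lipschitz along edges and every vertex other than the source has a neighbour strictly closer
to the source. Counting the vertices within distance `r` gives the degrees in `T_{m,n}^r`: a cycle
vertex at cyclic distance `c` from the bridge has degree `2r + (r - c)`, and the path vertex `j`
has degree `min j r + min (n - 1 - j) r + (r - j) + (r - j - 1)`. So `m + n - 2(2r - 1)` vertices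
have degree `2r`, three vertices (two on the cycle, one on the path) have each degree strictly
between `2r` and `3r`, and every other degree in `[r, 3r]` is attained exactly once. -/

open SimpleGraph Sum

namespace SimpleGraph

variable {V : Type*} {G : SimpleGraph V}

theorem power_adj {r : ℕ} {u v : V} :
    (G.power r).Adj u v ↔ u ≠ v ∧ G.Reachable u v ∧ G.dist u v ≤ r := Iff.rfl

theorem le_add_length_of_lipschitz {f : V → ℕ} (hf : ∀ a b, G.Adj a b → f b ≤ f a + 1)
    {u v : V} (p : G.Walk u v) : f v ≤ f u + p.length := by
  induction p with
  | nil => simp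
  | cons h _ ih =>
    have := hf _ _ h
    rw [Walk.length_cons]
    omega

theorem exists_walk_length_le_of_descent {u : V} {f : V → ℕ}
    (hf : ∀ v ≠ u, ∃ w, G.Adj w v ∧ f w < f v) (v : V) :
    ∃ p : G.Walk u v, p.length ≤ f v := by
  induction hv : f v using Nat.strong_induction_on generalizing v with
  | _ k ih =>
    by_cases h : v = u
    · subst h
      exact ⟨Walk.nil, by simp⟩
    · obtain ⟨w, hwv, hlt⟩ := hf v h
      obtain ⟨p, hp⟩ := ih (f w) (hv ▸ hlt) w rfl
      exact ⟨p.concat hwv, by rw [Walk.length_concat]; omega⟩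

theorem reachable_and_dist_eq_of_lipschitz_of_descent {u : V} {f : V → ℕ} (hu : f u = 0)
    (hlip : ∀ a b, G.Adj a b → f b ≤ f a + 1)
    (hdesc : ∀ v ≠ u, ∃ w, G.Adj w v ∧ f w < f v) (v : V) :
    G.Reachable u v ∧ G.dist u v = f v := by
  obtain ⟨p, hp⟩ := exists_walk_length_le_of_descent hdesc v
  obtain ⟨q, hq⟩ := p.reachable.exists_walk_length_eq_dist
  have := le_add_length_of_lipschitz hlip q
  exact ⟨p.reachable, le_antisymm ((dist_le p).trans hp) (by omega)⟩

theorem cycleGraph_adj_iff_val {m : ℕ} (hm : 2 ≤ m) {a b : Fin m} :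
    (cycleGraph m).Adj a b ↔ a.val + 1 = b.val ∨ b.val + 1 = a.val ∨
      (a.val = 0 ∧ b.val + 1 = m) ∨ (b.val = 0 ∧ a.val + 1 = m) := by
  rw [cycleGraph_adj']
  rcases lt_trichotomy a b with h | rfl | h
  · rw [Fin.coe_sub_iff_lt.2 h, Fin.coe_sub_iff_le.2 h.le, Fin.lt_def] at *
    omega
  · rw [Fin.coe_sub_iff_le.2 le_rfl]
    omega
  · rw [Fin.coe_sub_iff_le.2 h.le, Fin.coe_sub_iff_lt.2 h, Fin.lt_def] at *
    omega

end SimpleGraph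

namespace tadpoleGraph

variable {m n : ℕ}

@[simp] theorem adj_inl_inl {i j : Fin m} :
    (tadpoleGraph m n).Adj (inl i) (inl j) ↔ (cycleGraph m).Adj i j := Iff.rfl

@[simp] theorem adj_inr_inr {i j : Fin n} :
    (tadpoleGraph m n).Adj (inr i) (inr j) ↔ (pathGraph n).Adj i j := Iff.rfl

@[simp] theorem adj_inl_inr {i : Fin m} {j : Fin n} :
    (tadpoleGraph m n).Adj (inl i) (inr j) ↔ i.val = 0 ∧ j.val = 0 := Iff.rfl

@[simp] theorem adj_inr_inl {i : Fin n} {j : Fin m} :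
    (tadpoleGraph m n).Adj (inr i) (inl j) ↔ i.val = 0 ∧ j.val = 0 := Iff.rfl

end tadpoleGraph

def cycDist (m a b : ℕ) : ℕ := min (Nat.dist a b) (m - Nat.dist a b)

def tadpoleDist {m n : ℕ} : Fin m ⊕ Fin n → Fin m ⊕ Fin n → ℕ
  | inl i, inl j => cycDist m i j
  | inr i, inr j => Nat.dist i j
  | inl i, inr j => cycDist m 0 i + 1 + j
  | inr i, inl j => i + 1 + cycDist m 0 j

section TadpoleDist

variable {m n : ℕ}

theorem tadpoleDist_self (v : Fin m ⊕ Fin n) : tadpoleDist v v = 0 := by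
  rcases v with i | i <;> simp [tadpoleDist, cycDist]

theorem tadpoleDist_le_add_one_of_adj (hm : 2 ≤ m) (v : Fin m ⊕ Fin n) {a b : Fin m ⊕ Fin n}
    (h : (tadpoleGraph m n).Adj a b) : tadpoleDist v b ≤ tadpoleDist v a + 1 := by
  rcases a with a | a <;> rcases b with b | b <;> rcases v with v | v <;>
    simp only [tadpoleGraph.adj_inl_inl, tadpoleGraph.adj_inr_inr, tadpoleGraph.adj_inl_inr,
      tadpoleGraph.adj_inr_inl, cycleGraph_adj_iff_val hm, pathGraph_adj] at h <;>
    simp only [tadpoleDist, cycDist, Nat.dist] <;> omega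

theorem exists_cycleGraph_adj_cycDist_lt (hm : 2 ≤ m) {i j : Fin m} (hij : j ≠ i) :
    ∃ k, (cycleGraph m).Adj k j ∧ cycDist m i k < cycDist m i j := by
  have hi := i.isLt
  have hj := j.isLt
  obtain ⟨k, hk, hadj, hlt⟩ : ∃ k, ∃ _ : k < m, (k + 1 = j.val ∨ j.val + 1 = k ∨
      (k = 0 ∧ j.val + 1 = m) ∨ (j.val = 0 ∧ k + 1 = m)) ∧
      cycDist m i k < cycDist m i j := by
    simp only [cycDist, Nat.dist]
    -- step from `j` towards `i` along the shorter arc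
    rcases Nat.lt_or_gt_of_ne (Fin.val_ne_of_ne hij) with h | h <;>
      by_cases hd : 2 * Nat.dist i j ≤ m <;> simp only [Nat.dist] at hd
    · exact ⟨j + 1, by omega, by omega, by omega⟩
    · by_cases h0 : j.val = 0
      · exact ⟨m - 1, by omega, by omega, by omega⟩
      · exact ⟨j - 1, by omega, by omega, by omega⟩
    · exact ⟨j - 1, by omega, by omega, by omega⟩
    · by_cases h1 : j.val + 1 = m
      · exact ⟨0, by omega, by omega, by omega⟩
      · exact ⟨j + 1, by omega, by omega, by omega⟩
  exact ⟨⟨k, hk⟩, (cycleGraph_adj_iff_val (by omega)).2 hadj, hlt⟩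

theorem exists_adj_tadpoleDist_lt (hm : 2 ≤ m) {v x : Fin m ⊕ Fin n} (hx : x ≠ v) :
    ∃ w, (tadpoleGraph m n).Adj w x ∧ tadpoleDist v w < tadpoleDist v x := by
  rcases v with i | i <;> rcases x with j | j
  · obtain ⟨k, hk, hlt⟩ := exists_cycleGraph_adj_cycDist_lt hm (fun h => hx (congrArg inl h))
    exact ⟨inl k, hk, hlt⟩
  · obtain ⟨_ | j, hj⟩ := j
    · refine ⟨inl ⟨0, by omega⟩, ⟨rfl, rfl⟩, ?_⟩
      simp only [tadpoleDist, cycDist, Nat.dist]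
      omega
    · exact ⟨inr ⟨j, by omega⟩, by simp [pathGraph_adj], by simp [tadpoleDist]⟩
  · by_cases hj : j.val = 0
    · refine ⟨inr ⟨0, i.pos⟩, ⟨rfl, hj⟩, ?_⟩
      simp only [tadpoleDist, cycDist, Nat.dist]
      omega
    · obtain ⟨k, hk, hlt⟩ :=
          exists_cycleGraph_adj_cycDist_lt hm (i := ⟨0, by omega⟩) (j := j)
          (fun h => hj (by simp [h]))
      exact ⟨inl k, hk, by simp only [tadpoleDist]; exact Nat.add_lt_add_left hlt _⟩
  · have hij : j.val ≠ i.val := fun h => hx (congrArg inr (Fin.ext h))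
    rcases lt_or_gt_of_ne hij with h | h
    · exact ⟨inr ⟨j + 1, by omega⟩, by simp [pathGraph_adj],
        by simp only [tadpoleDist, Nat.dist]; omega⟩
    · exact ⟨inr ⟨j - 1, by omega⟩, by simp [pathGraph_adj]; omega,
        by simp only [tadpoleDist, Nat.dist]; omega⟩

theorem tadpoleGraph_reachable_and_dist (hm : 2 ≤ m) (u v : Fin m ⊕ Fin n) :
    (tadpoleGraph m n).Reachable u v ∧ (tadpoleGraph m n).dist u v = tadpoleDist u v :=
  reachable_and_dist_eq_of_lipschitz_of_descent (tadpoleDist_self u)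
    (fun _ _ => tadpoleDist_le_add_one_of_adj hm u)
    (fun _ hx => exists_adj_tadpoleDist_lt hm hx) v

end TadpoleDist

theorem Finset.card_filter_sum_fin {m n : ℕ} {p : Fin m ⊕ Fin n → Prop} [DecidablePred p]
    {pl pr : ℕ → Prop} [DecidablePred pl] [DecidablePred pr]
    (hl : ∀ i : Fin m, p (inl i) ↔ pl i) (hr : ∀ j : Fin n, p (inr j) ↔ pr j) :
    #{x | p x} = #{i ∈ range m | pl i} + #{j ∈ range n | pr j} := by
  rw [card_filter, Fintype.sum_sum_type, card_filter, card_filter,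
    ← Fin.sum_univ_eq_sum_range (fun i => if pl i then 1 else 0),
    ← Fin.sum_univ_eq_sum_range (fun j => if pr j then 1 else 0)]
  simp only [hl, hr]

section NeighbourCounts

variable {r m n : ℕ}

theorem card_range_filter_cycDist_le (hrm : 2 * r < m) {i : ℕ} (hi : i < m) :
    #{j ∈ range m | j ≠ i ∧ cycDist m i j ≤ r} = 2 * r := by
  -- the arc of radius `r` around `i`, cut where it wraps past `0`
  have e : {j ∈ range m | j ≠ i ∧ cycDist m i j ≤ r}
      = (Icc (i - r) (min (i + r) (m - 1)) \ {i}) ∪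
        (Ico 0 (i + r + 1 - m) ∪ Icc (m + i - r) (m - 1)) := by
    ext j
    rw [mem_filter]
    simp only [mem_range, mem_union, mem_sdiff, mem_Icc, mem_Ico, mem_singleton,
      cycDist, Nat.dist]
    omega
  rw [e, card_union_of_disjoint, card_union_of_disjoint, card_sdiff_of_subset]
  · simp only [Nat.card_Icc, Nat.card_Ico, card_singleton]
    omega
  all_goals
    simp only [Finset.disjoint_left, singleton_subset_iff, mem_union, mem_sdiff, mem_Icc, mem_Ico,
      mem_singleton]
    omega

theorem card_range_filter_dist_le {j : ℕ} (hj : j < n) :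
    #{k ∈ range n | k ≠ j ∧ Nat.dist j k ≤ r} = min j r + min (n - 1 - j) r := by
  have e : {k ∈ range n | k ≠ j ∧ Nat.dist j k ≤ r} =
      Icc (j - r) (min (j + r) (n - 1)) \ {j} := by
    ext k
    rw [mem_filter]
    simp only [mem_range, mem_sdiff, mem_Icc, mem_singleton, Nat.dist]
    omega
  rw [e, card_sdiff_of_subset (by simp only [singleton_subset_iff, mem_Icc]; omega),
    Nat.card_Icc, card_singleton]
  omega

theorem card_range_filter_add_one_add_le (hrn : r ≤ n) (c : ℕ) :
    #{k ∈ range n | c + 1 + k ≤ r} = r - c := by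
  have e : {k ∈ range n | c + 1 + k ≤ r} = range (r - c) := by
    ext k
    rw [mem_filter, mem_range, mem_range]
    omega
  rw [e, card_range]

theorem card_range_filter_add_one_add_cycDist_le (hrm : 2 * r < m) (j : ℕ) :
    #{k ∈ range m | j + 1 + cycDist m 0 k ≤ r} = (r - j) + (r - (j + 1)) := by
  have e : {k ∈ range m | j + 1 + cycDist m 0 k ≤ r} =
      range (r - j) ∪ Icc (m + (j + 1) - r) (m - 1) := by
    ext k
    rw [mem_filter]
    simp only [mem_range, mem_union, mem_Icc, cycDist, Nat.dist]
    omega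
  rw [e, card_union_of_disjoint (by simp only [Finset.disjoint_left, mem_range, mem_Icc]; omega),
    card_range, Nat.card_Icc]
  omega

end NeighbourCounts

def cycleVertexDegree (r m i : ℕ) : ℕ := 2 * r + (r - cycDist m 0 i)

def pathVertexDegree (r n j : ℕ) : ℕ := min j r + min (n - 1 - j) r + ((r - j) + (r - (j + 1)))

section Degrees

variable {r m n : ℕ}

theorem gdeg_power_tadpoleGraph (hm : 2 ≤ m) (v : Fin m ⊕ Fin n) :
    gdeg ((tadpoleGraph m n).power r) v = #{u | u ≠ v ∧ tadpoleDist v u ≤ r} := by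
  rw [gdeg, ← Set.ncard_coe_finset]
  congr 1
  ext u
  obtain ⟨hreach, hdist⟩ := tadpoleGraph_reachable_and_dist hm v u
  simp [power_adj, hreach, hdist, ne_comm]

theorem gdeg_power_tadpoleGraph_inl (hm : 2 ≤ m) (hrm : 2 * r < m) (hrn : r ≤ n) (i : Fin m) :
    gdeg ((tadpoleGraph m n).power r) (inl i) = cycleVertexDegree r m i := by
  rw [gdeg_power_tadpoleGraph hm,
    card_filter_sum_fin (pl := fun j => j ≠ i ∧ cycDist m i j ≤ r)
      (pr := fun k => cycDist m 0 i + 1 + k ≤ r) (fun j => by simp [tadpoleDist, Fin.val_inj])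
      (fun k => by simp [tadpoleDist]),
    card_range_filter_cycDist_le hrm i.isLt, card_range_filter_add_one_add_le hrn,
    cycleVertexDegree]

theorem gdeg_power_tadpoleGraph_inr (hm : 2 ≤ m) (hrm : 2 * r < m) (j : Fin n) :
    gdeg ((tadpoleGraph m n).power r) (inr j) = pathVertexDegree r n j := by
  rw [gdeg_power_tadpoleGraph hm,
    card_filter_sum_fin (pl := fun i => j + 1 + cycDist m 0 i ≤ r)
      (pr := fun k => k ≠ j ∧ Nat.dist j k ≤ r) (fun i => by simp [tadpoleDist])
      (fun k => by simp [tadpoleDist, Fin.val_inj]),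
    card_range_filter_add_one_add_cycDist_le hrm, card_range_filter_dist_le j.isLt,
    pathVertexDegree]
  omega

end Degrees

section DegreeClasses

variable {r m n : ℕ}

theorem card_gdeg_power_tadpoleGraph_eq (hm : 2 ≤ m) (hrm : 2 * r < m) (hrn : r ≤ n)
    (d : ℕ) :
    #{u | gdeg ((tadpoleGraph m n).power r) u = d} =
      #{i ∈ range m | cycleVertexDegree r m i = d} +
        #{j ∈ range n | pathVertexDegree r n j = d} :=
  card_filter_sum_fin (fun i => by rw [gdeg_power_tadpoleGraph_inl hm hrm hrn])
    (fun j => by rw [gdeg_power_tadpoleGraph_inr hm hrm])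

theorem card_gdeg_power_tadpoleGraph_of_lt (hm : 2 * r + 1 ≤ m) (hn : 2 * r + 1 ≤ n)
    {d : ℕ} (hrd : r ≤ d) (hd : d < 2 * r) :
    #{u | gdeg ((tadpoleGraph m n).power r) u = d} = 1 := by
  have hcyc : {i ∈ range m | cycleVertexDegree r m i = d} = ∅ := by
    ext i
    rw [mem_filter]
    simp only [mem_range, cycleVertexDegree, cycDist, Nat.dist, notMem_empty, iff_false]
    omega
  have hpath : {j ∈ range n | pathVertexDegree r n j = d} = {n - 1 - (d - r)} := by
    ext j
    rw [mem_filter]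
    simp only [mem_range, mem_singleton, pathVertexDegree]
    omega
  rw [card_gdeg_power_tadpoleGraph_eq (by omega) (by omega) (by omega), hcyc, hpath,
    card_empty, card_singleton]

theorem card_gdeg_power_tadpoleGraph_two_mul (hr : 1 ≤ r) (hm : 2 * r + 1 ≤ m)
    (hn : 2 * r + 1 ≤ n) :
    #{u | gdeg ((tadpoleGraph m n).power r) u = 2 * r} = m + n - 2 * (2 * r - 1) := by
  have hcyc : {i ∈ range m | cycleVertexDegree r m i = 2 * r} = Icc r (m - r) := by
    ext i
    rw [mem_filter]
    simp only [mem_range, mem_Icc, cycleVertexDegree, cycDist, Nat.dist]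
    omega
  have hpath : {j ∈ range n | pathVertexDegree r n j = 2 * r} = Icc (r - 1) (n - 1 - r) := by
    ext j
    rw [mem_filter]
    simp only [mem_range, mem_Icc, pathVertexDegree]
    omega
  rw [card_gdeg_power_tadpoleGraph_eq (by omega) (by omega) (by omega), hcyc, hpath,
    Nat.card_Icc, Nat.card_Icc]
  omega

theorem card_gdeg_power_tadpoleGraph_of_gt (hm : 2 * r + 1 ≤ m) (hn : 2 * r + 1 ≤ n)
    {d : ℕ} (hd : 2 * r < d) (hd' : d < 3 * r) :
    #{u | gdeg ((tadpoleGraph m n).power r) u = d} = 3 := by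
  have hcyc : {i ∈ range m | cycleVertexDegree r m i = d} = {3 * r - d, m - (3 * r - d)} := by
    ext i
    rw [mem_filter]
    simp only [mem_range, mem_insert, mem_singleton, cycleVertexDegree, cycDist, Nat.dist]
    omega
  have hpath : {j ∈ range n | pathVertexDegree r n j = d} = {3 * r - 1 - d} := by
    ext j
    rw [mem_filter]
    simp only [mem_range, mem_singleton, pathVertexDegree]
    omega
  rw [card_gdeg_power_tadpoleGraph_eq (by omega) (by omega) (by omega), hcyc, hpath,
    card_pair (by omega), card_singleton]

theorem card_gdeg_power_tadpoleGraph_three_mul (hr : 1 ≤ r) (hm : 2 * r + 1 ≤ m)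
    (hn : 2 * r + 1 ≤ n) :
    #{u | gdeg ((tadpoleGraph m n).power r) u = 3 * r} = 1 := by
  have hcyc : {i ∈ range m | cycleVertexDegree r m i = 3 * r} = {0} := by
    ext i
    rw [mem_filter]
    simp only [mem_range, mem_singleton, cycleVertexDegree, cycDist, Nat.dist]
    omega
  have hpath : {j ∈ range n | pathVertexDegree r n j = 3 * r} = ∅ := by
    ext j
    rw [mem_filter]
    simp only [mem_range, pathVertexDegree, notMem_empty, iff_false]
    omega
  rw [card_gdeg_power_tadpoleGraph_eq (by omega) (by omega) (by omega), hcyc, hpath,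
    card_singleton, card_empty]

theorem image_gdeg_power_tadpoleGraph (hr : 1 ≤ r) (hm : 2 * r + 1 ≤ m) (hn : 2 * r + 1 ≤ n) :
    univ.image (gdeg ((tadpoleGraph m n).power r)) = Ico r (3 * r + 1) := by
  ext d
  simp only [mem_image, mem_univ, true_and, mem_Ico]
  constructor
  · rintro ⟨i | j, rfl⟩
    · rw [gdeg_power_tadpoleGraph_inl (by omega) (by omega) (by omega)]
      simp only [cycleVertexDegree, cycDist, Nat.dist]
      omega
    · rw [gdeg_power_tadpoleGraph_inr (by omega) (by omega)]
      simp only [pathVertexDegree]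
      omega
  · intro hd
    have hpos : 0 < #{u | gdeg ((tadpoleGraph m n).power r) u = d} := by
      rcases lt_trichotomy d (2 * r) with h | rfl | h
      · rw [card_gdeg_power_tadpoleGraph_of_lt hm hn hd.1 h]; exact one_pos
      · rw [card_gdeg_power_tadpoleGraph_two_mul hr hm hn]; omega
      · rcases Nat.lt_or_ge d (3 * r) with h' | h'
        · rw [card_gdeg_power_tadpoleGraph_of_gt hm hn h h']; exact three_pos
        · rw [show d = 3 * r by omega, card_gdeg_power_tadpoleGraph_three_mul hr hm hn]
          exact one_pos
    obtain ⟨u, hu⟩ := card_pos.1 hpos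
    exact ⟨u, (mem_filter.1 hu).2⟩

end DegreeClasses

/-- For `r ≥ 1` and `m, n ≥ 2r + 1`, the compound curling number of the
`r`-th power of the tadpole graph `T_{m,n}` is `3 ^ (r - 1) * (m + n - 2(2r - 1))`. -/
theorem compoundCurlingNumber_tadpoleGraph_power (r m n : ℕ) (hr : 1 ≤ r)
    (hm : 2 * r + 1 ≤ m) (hn : 2 * r + 1 ≤ n) :
    compoundCurlingNumber ((tadpoleGraph m n).power r) =
      3 ^ (r - 1) * (m + n - 2 * (2 * r - 1)) := by
  rw [compoundCurlingNumber, image_gdeg_power_tadpoleGraph hr hm hn,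
    prod_Ico_succ_top (by omega), ← prod_Ico_consecutive _ (by omega : r ≤ 2 * r) (by omega),
    prod_eq_prod_Ico_succ_bot (by omega : 2 * r < 3 * r),
    prod_eq_one fun d hd => card_gdeg_power_tadpoleGraph_of_lt hm hn (mem_Ico.1 hd).1
      (mem_Ico.1 hd).2,
    prod_congr rfl fun d hd => card_gdeg_power_tadpoleGraph_of_gt hm hn (mem_Ico.1 hd).1
      (mem_Ico.1 hd).2,
    prod_const, Nat.card_Ico, card_gdeg_power_tadpoleGraph_two_mul hr hm hn,
    card_gdeg_power_tadpoleGraph_three_mul hr hm hn]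
  rw [show 3 * r - (2 * r + 1) = r - 1 by omega]
  ring
end

section
/- Let T be the complete binary tree of height h ≥ 2 and let r be a positive integer with 1 ≤ r ≤ 2h − 1. Then the curling number of the r-th power T^r equals 2^h. -/
open Finset

/-- The complete `n`-ary tree of height `h`: the vertices at depth `i` (`0 ≤ i ≤ h`) are
indexed by `Fin (n ^ i)`, and vertex `k` at depth `i + 1` is a child of vertex `k / n`
at depth `i`. -/
def completeNaryTree (n h : ℕ) : SimpleGraph (Σ i : Fin (h + 1), Fin (n ^ (i : ℕ))) where
  Adj u v :=
    ((u.1 : ℕ) + 1 = (v.1 : ℕ) ∧ (v.2 : ℕ) / n = (u.2 : ℕ)) ∨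
    ((v.1 : ℕ) + 1 = (u.1 : ℕ) ∧ (u.2 : ℕ) / n = (v.2 : ℕ))
  symm := ⟨fun u v h => h.symm⟩
  loopless := ⟨fun u h => by rcases h with ⟨h1, -⟩ | ⟨h1, -⟩ <;> omega⟩


/-!
Degrees in `T^r` are constant on each level: on level `i`, the map `l ↦ l ^^^ m / 2 ^ (h - i)` is
an automorphism of `T` moving the leftmost vertex to any other. It therefore suffices to show
that a leaf has strictly fewer vertices within distance `r` than a vertex of any other level; then
the leaves form a degree class of size `2 ^ h`, and every other class lies among the remaining
`2 ^ h - 1` vertices.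

Seen from the leftmost vertex of depth `i`, the vertex with index `l` at depth `c + size l` lies
at distance `size l + |i - c|` (it leaves the leftmost branch at depth `c`). Counting the ball
by `l`, the admissible `c` form an interval which is never shorter for `i < h` than for `i = h`,
and strictly longer when `size l = ⌈r / 2⌉`.
-/
open SimpleGraph

namespace SimpleGraph

variable {V W : Type*} {G : SimpleGraph V} {G' : SimpleGraph W}

theorem Reachable.dist_map_le (f : G →g G') {u v : V} (huv : G.Reachable u v) :
    G'.dist (f u) (f v) ≤ G.dist u v := by
  obtain ⟨p, hp⟩ := huv.exists_walk_length_eq_dist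
  exact hp ▸ (p.length_map f) ▸ dist_le (p.map f)

theorem Iso.dist_eq (e : G ≃g G') (u v : V) : G'.dist (e u) (e v) = G.dist u v := by
  by_cases huv : G.Reachable u v
  · refine le_antisymm (huv.dist_map_le e.toHom) ?_
    simpa using ((Iso.reachable_iff (φ := e)).2 huv).dist_map_le e.symm.toHom
  · rw [dist_eq_zero_of_not_reachable huv,
      dist_eq_zero_of_not_reachable (Iso.reachable_iff.not.2 huv)]

theorem Reachable.le_add_dist {f : V → ℕ} (hf : ∀ u v, G.Adj u v → f u ≤ f v + 1) {u v : V}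
    (huv : G.Reachable u v) : f u ≤ f v + G.dist u v := by
  obtain ⟨p, hp⟩ := huv.exists_walk_length_eq_dist
  rw [← hp]
  clear hp huv
  induction p with
  | nil => simp
  | cons hadj _ ih => have := hf _ _ hadj; simp only [Walk.length_cons]; omega

theorem gdeg_power_add_one [Fintype V] (hG : G.Connected) (r : ℕ) (v : V) :
    gdeg (G.power r) v + 1 = #{w | G.dist v w ≤ r} := by
  classical
  have hv : v ∈ ({w | G.dist v w ≤ r} : Finset V) := by simp
  have hnbr : (G.power r).neighborSet v = ↑(({w | G.dist v w ≤ r} : Finset V).erase v) := by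
    ext w
    simp [power, hG.preconnected v w, ne_comm, and_comm]
  rw [gdeg, hnbr, Set.ncard_coe_finset, Finset.card_erase_add_one hv]

theorem Iso.card_ball_apply [Fintype V] (e : G ≃g G) (r : ℕ) (v : V) :
    #{w | G.dist (e v) w ≤ r} = #{w | G.dist v w ≤ r} := by
  refine Finset.card_nbij' e.symm e ?_ ?_ (fun _ _ => e.apply_symm_apply _)
    (fun _ _ => e.symm_apply_apply _)
  · intro w hw
    simpa [← e.dist_eq v (e.symm w)] using hw
  · intro w hw
    simpa [e.dist_eq] using hw

end SimpleGraph

theorem curlingNumber_eq_card_of_degree_class {V : Type*} [Fintype V] (G : SimpleGraph V)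
    (L : Finset V) (hL : ∀ u ∈ L, ∀ v, v ∈ L ↔ gdeg G v = gdeg G u)
    (hcard : Fintype.card V ≤ 2 * #L) :
    curlingNumber G = #L := by
  classical
  have hclass : ∀ u ∈ L, ({v | gdeg G v = gdeg G u} : Finset V) = L := fun u hu => by
    ext v; simp [hL u hu v]
  refine le_antisymm (Finset.sup_le fun v _ => ?_) ?_
  · by_cases hv : v ∈ L
    · rw [hclass v hv]
    · have hsub : ({u | gdeg G u = gdeg G v} : Finset V) ⊆ univ \ L := fun u hu => by
        simp only [Finset.mem_filter, Finset.mem_univ, true_and, Finset.mem_sdiff] at hu ⊢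
        exact fun huL => hv ((hL u huL v).2 hu.symm)
      have := Finset.card_le_card hsub
      rw [Finset.card_sdiff_of_subset (Finset.subset_univ L), Finset.card_univ] at this
      omega
  · obtain rfl | ⟨u, hu⟩ := L.eq_empty_or_nonempty
    · simp
    · exact hclass u hu ▸ Finset.le_sup (f := fun v => #{w | gdeg G w = gdeg G v}) (mem_univ u)

theorem Nat.size_div_two (n : ℕ) : Nat.size (n / 2) = Nat.size n - 1 := by
  refine eq_of_forall_ge_iff fun k => ?_
  rw [Nat.size_le, Nat.div_lt_iff_lt_mul two_pos, ← pow_succ, ← Nat.size_le]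
  omega

namespace completeNaryTree

abbrev Vertex (n h : ℕ) := Σ i : Fin (h + 1), Fin (n ^ (i : ℕ))

variable {h : ℕ}

theorem vertex_ext {n : ℕ} {x y : Vertex n h} (h₁ : (x.1 : ℕ) = y.1) (h₂ : (x.2 : ℕ) = y.2) :
    x = y := by
  obtain ⟨⟨j, hj⟩, l, hl⟩ := x
  obtain ⟨⟨j', hj'⟩, l', hl'⟩ := y
  simp only at h₁ h₂
  subst h₁ h₂
  rfl

def leftmost (i : Fin (h + 1)) : Vertex 2 h := ⟨i, 0, Nat.two_pow_pos _⟩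

theorem exists_walk_to_ancestor (t : ℕ) {x y : Vertex 2 h} (hdepth : (x.1 : ℕ) = y.1 + t)
    (hidx : (x.2 : ℕ) / 2 ^ t = y.2) : ∃ p : (completeNaryTree 2 h).Walk x y, p.length = t := by
  induction t generalizing x with
  | zero =>
    obtain rfl : x = y := vertex_ext hdepth (by simpa using hidx)
    exact ⟨.nil, rfl⟩
  | succ t ih =>
    have hpar : (x.2 : ℕ) / 2 < 2 ^ ((y.1 : ℕ) + t) := by
      rw [Nat.div_lt_iff_lt_mul two_pos, ← pow_succ, add_assoc, ← hdepth]
      exact x.2.isLt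
    let parent : Vertex 2 h := ⟨⟨y.1 + t, by omega⟩, (x.2 : ℕ) / 2, hpar⟩
    have hadj : (completeNaryTree 2 h).Adj x parent := Or.inr ⟨by simp [parent]; omega, rfl⟩
    obtain ⟨p, hp⟩ := ih (x := parent) rfl
      (by simp [parent, Nat.div_div_eq_div_mul, ← pow_succ', hidx])
    exact ⟨.cons hadj p, by simp [hp]⟩

theorem connected : (completeNaryTree 2 h).Connected := by
  have hroot (x : Vertex 2 h) : (completeNaryTree 2 h).Reachable x (leftmost 0) := by
    obtain ⟨p, -⟩ := exists_walk_to_ancestor x.1 (y := leftmost 0) (by simp [leftmost])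
      (Nat.div_eq_of_lt x.2.isLt)
    exact p.reachable
  exact ⟨fun x y => (hroot x).trans (hroot y).symm⟩

def forkDepth (w : Vertex 2 h) : ℕ := w.1 - Nat.size w.2

theorem size_le_depth (w : Vertex 2 h) : Nat.size w.2 ≤ w.1 := Nat.size_le.2 w.2.isLt

theorem dist_leftmost (i : Fin (h + 1)) (w : Vertex 2 h) :
    (completeNaryTree 2 h).dist (leftmost i) w = Nat.size w.2 + Nat.dist i (forkDepth w) := by
  have hw := size_le_depth w
  refine le_antisymm ?_ ?_
  · let m : Fin (h + 1) := ⟨min i (forkDepth w), by omega⟩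
    have hm : (m : ℕ) = min (i : ℕ) (w.1 - Nat.size w.2) := rfl
    obtain ⟨p, hp⟩ := exists_walk_to_ancestor (i - m) (x := leftmost i) (y := leftmost m)
      (by simp only [leftmost]; omega) (by simp [leftmost])
    obtain ⟨q, hq⟩ := exists_walk_to_ancestor (w.1 - m) (x := w) (y := leftmost m)
      (by simp only [leftmost]; omega)
      (Nat.div_eq_of_lt ((Nat.lt_size_self _).trans_le (Nat.pow_le_pow_right two_pos (by omega))))
    have hlen := dist_le (p.append q.reverse)
    rw [Walk.length_append, Walk.length_reverse, hp, hq] at hlen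
    simp only [forkDepth, Nat.dist]
    omega
  · have hlip (x y : Vertex 2 h) (hxy : (completeNaryTree 2 h).Adj x y) :
        Nat.size y.2 + Nat.dist i (forkDepth y) ≤ Nat.size x.2 + Nat.dist i (forkDepth x) + 1 := by
      have := size_le_depth x
      have := size_le_depth y
      have hx := Nat.size_div_two x.2
      have hy := Nat.size_div_two y.2
      simp only [forkDepth, Nat.dist]
      rcases hxy with ⟨hd, hl⟩ | ⟨hd, hl⟩
      · rw [hl] at hy
        omega
      · rw [hl] at hx
        omega
    have := (connected.preconnected w (leftmost i)).le_add_dist (f := fun x =>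
      Nat.size x.2 + Nat.dist i (forkDepth x)) fun u v huv => hlip v u huv.symm
    simpa [dist_comm, leftmost, forkDepth] using this

def xorShift (m : Fin (2 ^ h)) (w : Vertex 2 h) : Vertex 2 h :=
  ⟨w.1, (w.2 : ℕ) ^^^ m / 2 ^ (h - w.1), Nat.xor_lt_two_pow w.2.isLt <| by
    rw [Nat.div_lt_iff_lt_mul (Nat.two_pow_pos _), ← pow_add, Nat.add_sub_of_le (by omega)]
    exact m.isLt⟩

theorem xorShift_involutive (m : Fin (2 ^ h)) : Function.Involutive (xorShift m) := fun w =>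
  vertex_ext rfl (by simp [xorShift])

theorem xorShift_adj (m : Fin (2 ^ h)) {x y : Vertex 2 h} (hxy : (completeNaryTree 2 h).Adj x y) :
    (completeNaryTree 2 h).Adj (xorShift m x) (xorShift m y) := by
  have hchild (p c : Vertex 2 h) (hd : (p.1 : ℕ) + 1 = c.1) (hl : (c.2 : ℕ) / 2 = p.2) :
      ((c.2 : ℕ) ^^^ m / 2 ^ (h - c.1)) / 2 = (p.2 : ℕ) ^^^ m / 2 ^ (h - p.1) := by
    rw [Nat.xor_div_two, hl, Nat.div_div_eq_div_mul, ← pow_succ]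
    congr 3
    omega
  rcases hxy with ⟨hd, hl⟩ | ⟨hd, hl⟩
  · exact Or.inl ⟨hd, hchild x y hd hl⟩
  · exact Or.inr ⟨hd, hchild y x hd hl⟩

def xorShiftIso (m : Fin (2 ^ h)) : completeNaryTree 2 h ≃g completeNaryTree 2 h where
  toEquiv := (xorShift_involutive m).toPerm
  map_rel_iff' {x y} := ⟨fun hxy => by
    simpa only [Function.Involutive.coe_toPerm, xorShift_involutive m x,
      xorShift_involutive m y] using xorShift_adj m hxy, xorShift_adj m⟩

theorem exists_iso_leftmost (w : Vertex 2 h) :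
    ∃ e : completeNaryTree 2 h ≃g completeNaryTree 2 h, e (leftmost w.1) = w := by
  have hm : (w.2 : ℕ) * 2 ^ (h - w.1) < 2 ^ h := by
    calc (w.2 : ℕ) * 2 ^ (h - w.1) < 2 ^ (w.1 : ℕ) * 2 ^ (h - w.1) :=
          Nat.mul_lt_mul_of_pos_right w.2.isLt (Nat.two_pow_pos _)
      _ = 2 ^ h := by rw [← pow_add, Nat.add_sub_of_le (by omega)]
  refine ⟨xorShiftIso ⟨_, hm⟩, vertex_ext rfl ?_⟩
  simp [xorShiftIso, xorShift, leftmost]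

/-- The `l`-th summand is the length of the interval
`Icc (i + size l - r) (min (h - size l) (i + r - size l))` of admissible fork depths. -/
theorem card_ball_leftmost (i : Fin (h + 1)) (r : ℕ) :
    #{w | (completeNaryTree 2 h).dist (leftmost i) w ≤ r} =
      ∑ l ∈ range (2 ^ h),
        (min (h - Nat.size l) (i + r - Nat.size l) + 1 - (i + Nat.size l - r)) := by
  simp_rw [← Nat.card_Icc, ← Finset.card_sigma]
  refine Finset.card_bij' (fun w _ => ⟨w.2, forkDepth w⟩)
    (fun p hp => ⟨⟨p.2 + Nat.size p.1, ?_⟩, p.1, ?_⟩) ?_ ?_ ?_ ?_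
  · simp only [Finset.mem_sigma, mem_range, mem_Icc] at hp
    have := Nat.size_le.2 hp.1
    omega
  · exact (Nat.lt_size_self _).trans_le (Nat.pow_le_pow_right two_pos (Nat.le_add_left _ _))
  · intro w hw
    have hw₁ := size_le_depth w
    have hw₂ : (w.2 : ℕ) < 2 ^ h := w.2.isLt.trans_le (Nat.pow_le_pow_right two_pos (by omega))
    have hw₃ := w.1.isLt
    simp only [mem_filter_univ, dist_leftmost, Finset.mem_sigma, mem_range, mem_Icc, forkDepth,
      Nat.dist] at hw ⊢
    omega
  · intro p hp
    simp only [Finset.mem_sigma, mem_range, mem_Icc] at hp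
    have := Nat.size_le.2 hp.1
    simp only [mem_filter_univ, dist_leftmost, forkDepth, Nat.dist, Nat.add_sub_cancel]
    omega
  · intro w _
    exact vertex_ext (by have := size_le_depth w; simp only [forkDepth]; omega) rfl
  · intro p _
    simp [forkDepth]

theorem card_vertex : Fintype.card (Vertex 2 h) = 2 ^ (h + 1) - 1 := by
  simp [Fintype.card_sigma, Fin.sum_univ_eq_sum_range (fun j => 2 ^ j), Nat.geomSum_eq le_rfl]

theorem card_ball_leaf_lt_card_ball {i : Fin (h + 1)} (hi : i < Fin.last h) {r : ℕ} (hr₁ : 1 ≤ r)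
    (hr₂ : r ≤ 2 * h - 1) :
    #{w | (completeNaryTree 2 h).dist (leftmost (Fin.last h)) w ≤ r} <
      #{w | (completeNaryTree 2 h).dist (leftmost i) w ≤ r} := by
  have hi' : (i : ℕ) < h := hi
  rw [card_ball_leftmost, card_ball_leftmost, Fin.val_last]
  refine Finset.sum_lt_sum (fun l hl => ?_) ⟨2 ^ ((r + 1) / 2 - 1), ?_, ?_⟩
  · have := Nat.size_le.2 (mem_range.1 hl)
    omega
  · exact mem_range.2 (Nat.pow_lt_pow_right one_lt_two (by omega))
  · rw [Nat.size_pow]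
    omega

theorem gdeg_power_add_one_eq_card_ball_leftmost (r : ℕ) (w : Vertex 2 h) :
    gdeg ((completeNaryTree 2 h).power r) w + 1 =
      #{u | (completeNaryTree 2 h).dist (leftmost w.1) u ≤ r} := by
  obtain ⟨e, he⟩ := exists_iso_leftmost w
  rw [SimpleGraph.gdeg_power_add_one connected, ← Iso.card_ball_apply e (v := leftmost w.1), he]

theorem gdeg_power_eq_iff_of_leaf {r : ℕ} (hr₁ : 1 ≤ r) (hr₂ : r ≤ 2 * h - 1) {u : Vertex 2 h}
    (hu : u.1 = Fin.last h) (v : Vertex 2 h) :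
    gdeg ((completeNaryTree 2 h).power r) v = gdeg ((completeNaryTree 2 h).power r) u ↔
      v.1 = Fin.last h := by
  rw [← add_left_inj 1, gdeg_power_add_one_eq_card_ball_leftmost,
    gdeg_power_add_one_eq_card_ball_leftmost, hu]
  refine ⟨fun hv => ?_, fun hv => by rw [hv]⟩
  by_contra hne
  exact (card_ball_leaf_lt_card_ball (Fin.lt_last_iff_ne_last.2 hne) hr₁ hr₂).ne' hv

end completeNaryTree

theorem curlingNumber_completeBinaryTree_power_general (h r : ℕ)
    (hr1 : 1 ≤ r) (hr2 : r ≤ 2 * h - 1) :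
    curlingNumber ((completeNaryTree 2 h).power r) = 2 ^ h := by
  let leaves : Finset (completeNaryTree.Vertex 2 h) :=
    ({Fin.last h} : Finset _).sigma fun _ => univ
  have hmem (w : completeNaryTree.Vertex 2 h) : w ∈ leaves ↔ w.1 = Fin.last h := by simp [leaves]
  have hcard : #leaves = 2 ^ h := by simp [leaves]
  rw [← hcard]
  refine curlingNumber_eq_card_of_degree_class _ leaves (fun u hu v => ?_) ?_
  · rw [hmem, completeNaryTree.gdeg_power_eq_iff_of_leaf hr1 hr2 ((hmem u).1 hu)]
  · rw [completeNaryTree.card_vertex, hcard, pow_succ]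
    omega

/-- For the complete binary tree `T` of height `h ≥ 2` and `1 ≤ r ≤ 2h - 1`,
the curling number of the `r`-th power `T^r` is `2 ^ h`. -/
theorem curlingNumber_completeBinaryTree_power (h r : ℕ) (hh : 2 ≤ h)
    (hr1 : 1 ≤ r) (hr2 : r ≤ 2 * h - 1) :
    curlingNumber ((completeNaryTree 2 h).power r) = 2 ^ h :=
  curlingNumber_completeBinaryTree_power_general h r hr1 hr2
end

section
/- Let G be a caterpillar, i.e., a tree whose non-leaf vertices induce a path u_1, u_2, …, u_n (the spine), with n ≥ 2. For 1 ≤ i ≤ n let l_i denote the number of leaves of G adjacent to u_i, and let η denote the maximum number of times any single value occurs among the degrees deg(u_1), …, deg(u_n). Then the curling number of G equals max{η, l_1 + l_2 + ⋯ + l_n}. -/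
open Finset

lemma reach_closed {V : Type*} (G : SimpleGraph V) (S : Set V)
    (hS : ∀ a b, a ∈ S → G.Adj a b → b ∈ S) :
    ∀ {a b : V}, G.Walk a b → a ∈ S → b ∈ S := by
  intro a b w
  induction w with
  | nil => exact id
  | cons h p ih => intro ha; exact ih (hS _ _ ha h)

/-- For a caterpillar `G` (a tree whose non-leaf vertices induce a path
`u 0, u 1, …, u (n-1)`, the spine, with `n ≥ 2`), letting `l i` be the number of leaves
adjacent to `u i` and `η` the maximum multiplicity of a value among the spine degrees,
the curling number of `G` is `max {η, l 0 + l 1 + ⋯ + l (n-1)}`. -/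
theorem curlingNumber_caterpillar {V : Type*} [Fintype V] (G : SimpleGraph V)
    (n : ℕ) (hn : 2 ≤ n) (hT : G.IsTree)
    (u : Fin n → V) (hinj : Function.Injective u)
    (hspine : ∀ v : V, gdeg G v ≠ 1 ↔ v ∈ Set.range u)
    (hpath : ∀ i j : Fin n, G.Adj (u i) (u j) ↔ ((i : ℕ) + 1 = (j : ℕ) ∨ (j : ℕ) + 1 = (i : ℕ))) :
    curlingNumber G =
      max
        (Finset.univ.sup fun i : Fin n =>
          (Finset.univ.filter fun j : Fin n => gdeg G (u j) = gdeg G (u i)).card)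
        (∑ i : Fin n, ({v : V | gdeg G v = 1 ∧ G.Adj (u i) v}).ncard) := by
  classical
  have hA : ∀ i : Fin n, gdeg G (u i) ≠ 1 := fun i => (hspine (u i)).mpr ⟨i, rfl⟩
  have hone : ∀ v : V, gdeg G v = 1 → ∃ w, G.neighborSet v = {w} := by
    intro v hv
    exact Set.ncard_eq_one.mp hv
  have hC : ∀ v w : V, gdeg G v = 1 → G.Adj v w → gdeg G w ≠ 1 := by
    intro v w hv hadj hw
    obtain ⟨x, hx⟩ := hone v hv
    obtain ⟨y, hy⟩ := hone w hw
    have hxw : x = w := by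
      have h0 : w ∈ G.neighborSet v := hadj
      rw [hx] at h0; exact h0.symm
    have hyv : y = v := by
      have h0 : v ∈ G.neighborSet w := hadj.symm
      rw [hy] at h0; exact h0.symm
    rw [hxw] at hx
    rw [hyv] at hy
    have hS : ∀ a b : V, a ∈ ({v, w} : Set V) → G.Adj a b → b ∈ ({v, w} : Set V) := by
      intro a b ha hab
      simp only [Set.mem_insert_iff, Set.mem_singleton_iff] at ha ⊢
      rcases ha with rfl | rfl
      · have h0 : b ∈ G.neighborSet a := hab
        rw [hx] at h0; right; exact h0
      · have h0 : b ∈ G.neighborSet a := hab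
        rw [hy] at h0; left; exact h0
    obtain ⟨p⟩ := hT.isConnected.preconnected v (u ⟨0, by omega⟩)
    have hmem := reach_closed G _ hS p (by simp)
    simp only [Set.mem_insert_iff, Set.mem_singleton_iff] at hmem
    rcases hmem with h | h
    · exact hA _ (by rw [h]; exact hv)
    · exact hA _ (by rw [h]; exact hw)
  set t : Fin n → Finset V := fun i => univ.filter (fun v => gdeg G v = 1 ∧ G.Adj (u i) v) with ht
  set Lf : Finset V := univ.filter (fun v => gdeg G v = 1) with hLf
  have hdisj : ∀ i ∈ (univ : Finset (Fin n)), ∀ j ∈ univ, i ≠ j → Disjoint (t i) (t j) := by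
    intro i _ j _ hij
    rw [Finset.disjoint_left]
    intro v hvi hvj
    simp only [ht, mem_filter] at hvi hvj
    obtain ⟨x, hx⟩ := hone v hvi.2.1
    have h1 : u i = x := by
      have h0 : u i ∈ G.neighborSet v := hvi.2.2.symm; rwa [hx] at h0
    have h2 : u j = x := by
      have h0 : u j ∈ G.neighborSet v := hvj.2.2.symm; rwa [hx] at h0
    exact hij (hinj (h1.trans h2.symm))
  have hunion : univ.biUnion t = Lf := by
    ext v
    simp only [ht, hLf, mem_biUnion, mem_filter, mem_univ, true_and]
    constructor
    · rintro ⟨i, hv, _⟩; exact hv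
    · intro hv
      obtain ⟨w, hw⟩ := hone v hv
      have hadj : G.Adj v w := by rw [← SimpleGraph.mem_neighborSet, hw]; rfl
      obtain ⟨i, hi⟩ := (hspine w).mp (hC v w hv hadj)
      refine ⟨i, hv, ?_⟩
      rw [hi]; exact hadj.symm
  have hsumL : ∑ i : Fin n, ({v : V | gdeg G v = 1 ∧ G.Adj (u i) v}).ncard = Lf.card := by
    have hk : ∀ i : Fin n, ({v : V | gdeg G v = 1 ∧ G.Adj (u i) v}).ncard = (t i).card := by
      intro i
      rw [Set.ncard_eq_toFinset_card']
      congr 1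
      ext v
      simp [ht]
    simp_rw [hk]
    rw [← Finset.card_biUnion hdisj, hunion]
  have hE : ∀ i : Fin n,
      (univ.filter fun w => gdeg G w = gdeg G (u i)).card
        = (univ.filter fun j : Fin n => gdeg G (u j) = gdeg G (u i)).card := by
    intro i
    refine (Finset.card_bij (fun j _ => u j) ?_ ?_ ?_).symm
    · intro j hj; simp only [mem_filter, mem_univ, true_and] at hj ⊢; exact hj
    · intro j _ k _ h; exact hinj h
    · intro w hw
      simp only [mem_filter, mem_univ, true_and] at hw
      have hw1 : gdeg G w ≠ 1 := by rw [hw]; exact hA i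
      obtain ⟨j, hj⟩ := (hspine w).mp hw1
      refine ⟨j, by simp [hj, hw], hj⟩
  have hF : ∀ v : V, gdeg G v = 1 →
      (univ.filter fun w => gdeg G w = gdeg G v).card = Lf.card := by
    intro v hv
    congr 1
    rw [hLf]
    ext w
    simp [hv]
  rw [hsumL]
  unfold curlingNumber
  apply le_antisymm
  · apply Finset.sup_le
    intro v _
    by_cases hv : gdeg G v = 1
    · rw [hF v hv]; exact le_max_right _ _
    · obtain ⟨i, hi⟩ := (hspine v).mp hv
      rw [← hi, hE i]
      exact le_trans (Finset.le_sup (f := fun i : Fin n => (univ.filter fun j : Fin n => gdeg G (u j) = gdeg G (u i)).card) (mem_univ i)) (le_max_left _ _)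
  · apply max_le
    · apply Finset.sup_le
      intro i _
      rw [← hE i]
      exact Finset.le_sup (f := fun v => (univ.filter fun w => gdeg G w = gdeg G v).card) (mem_univ (u i))
    · rcases Nat.eq_zero_or_pos Lf.card with h | h
      · omega
      · obtain ⟨v, hv⟩ := Finset.card_pos.mp h
        rw [hLf, mem_filter] at hv
        rw [← hF v hv.2]
        exact Finset.le_sup (f := fun v => (univ.filter fun w => gdeg G w = gdeg G v).card) (mem_univ v)
end

section
/- Let G be a caterpillar, i.e., a tree whose non-leaf vertices induce a path u_1, u_2, …, u_n (the spine), with n ≥ 2, and let η denote the maximum number of times any single value occurs among the degrees deg(u_1), …, deg(u_n). Then the curling number of G equals max{η, (deg(u_1) + deg(u_2) + ⋯ + deg(u_n)) − 2(n − 1)}. -/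
open Finset

/-- For a caterpillar `G` (a tree whose non-leaf vertices induce a path
`u 0, u 1, …, u (n-1)`, the spine, with `n ≥ 2`), letting `η` be the maximum multiplicity
of a value among the spine degrees, the curling number of `G` is
`max {η, (deg (u 0) + ⋯ + deg (u (n-1))) - 2(n - 1)}`. -/
theorem curlingNumber_caterpillar' {V : Type*} [Fintype V] (G : SimpleGraph V)
    (n : ℕ) (hn : 2 ≤ n) (hT : G.IsTree)
    (u : Fin n → V) (hinj : Function.Injective u)
    (hspine : ∀ v : V, gdeg G v ≠ 1 ↔ v ∈ Set.range u)
    (hpath : ∀ i j : Fin n, G.Adj (u i) (u j) ↔ ((i : ℕ) + 1 = (j : ℕ) ∨ (j : ℕ) + 1 = (i : ℕ))) :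
    curlingNumber G =
      max
        (Finset.univ.sup fun i : Fin n =>
          (Finset.univ.filter fun j : Fin n => gdeg G (u j) = gdeg G (u i)).card)
        ((∑ i : Fin n, gdeg G (u i)) - 2 * (n - 1)) := by
  classical
  have hdeg : ∀ v, gdeg G v = G.degree v := by
    intro v
    simp [gdeg, SimpleGraph.degree, SimpleGraph.neighborFinset,
      Set.ncard_eq_toFinset_card']
  set L : ℕ := (univ.filter fun v => gdeg G v = 1).card with hL
  -- the set of spine vertices as a finset
  have hspineF : (univ.filter fun v : V => ¬ gdeg G v = 1) = univ.image u := by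
    ext v
    simp only [mem_filter, mem_univ, true_and, mem_image]
    constructor
    · intro h
      obtain ⟨i, rfl⟩ := (hspine v).mp h
      exact ⟨i, rfl⟩
    · rintro ⟨i, rfl⟩
      exact (hspine (u i)).mpr ⟨i, rfl⟩
  have hcardspine : (univ.filter fun v : V => ¬ gdeg G v = 1).card = n := by
    rw [hspineF, Finset.card_image_of_injective _ hinj, card_univ, Fintype.card_fin]
  have hcardV : Fintype.card V = L + n := by
    have h := Finset.card_filter_add_card_filter_not
      (s := (univ : Finset V)) (p := fun v => gdeg G v = 1)
    rw [hcardspine, ← hL, card_univ] at h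
    omega
  have hsum_all : ∑ v, gdeg G v = 2 * (Fintype.card V - 1) := by
    have h1 : ∑ v, G.degree v = 2 * G.edgeFinset.card :=
      SimpleGraph.sum_degrees_eq_twice_card_edges G
    have h2 := hT.card_edgeFinset
    simp only [hdeg]
    rw [h1]
    omega
  have hsum_leaf : ∑ v ∈ univ.filter (fun v => gdeg G v = 1), gdeg G v = L := by
    rw [hL]
    calc ∑ v ∈ univ.filter (fun v => gdeg G v = 1), gdeg G v
        = ∑ v ∈ univ.filter (fun v => gdeg G v = 1), 1 :=
          Finset.sum_congr rfl (fun v hv => (mem_filter.mp hv).2)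
      _ = _ := by simp
  have hsum_spine : ∑ v ∈ univ.filter (fun v : V => ¬ gdeg G v = 1), gdeg G v
      = ∑ i : Fin n, gdeg G (u i) := by
    rw [hspineF]
    exact Finset.sum_image (fun x _ y _ h => hinj h)
  have hsplit : ∑ v ∈ univ.filter (fun v => gdeg G v = 1), gdeg G v
      + ∑ v ∈ univ.filter (fun v : V => ¬ gdeg G v = 1), gdeg G v = ∑ v, gdeg G v :=
    Finset.sum_filter_add_sum_filter_not _ _ _
  have hS : ∑ i : Fin n, gdeg G (u i) = 2 * (n - 1) + L := by
    rw [hsum_leaf, hsum_spine, hsum_all, hcardV] at hsplit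
    omega
  have hLeq : (∑ i : Fin n, gdeg G (u i)) - 2 * (n - 1) = L := by omega
  -- class of a leaf
  have hclass_leaf : ∀ v, gdeg G v = 1 →
      (univ.filter fun w => gdeg G w = gdeg G v).card = L := by
    intro v hv
    rw [hL]
    congr 1
    ext w
    simp [hv]
  -- class of a spine vertex
  have hclass_spine : ∀ i : Fin n, (univ.filter fun w => gdeg G w = gdeg G (u i)).card
      = (univ.filter fun j : Fin n => gdeg G (u j) = gdeg G (u i)).card := by
    intro i
    have hne : gdeg G (u i) ≠ 1 := (hspine (u i)).mpr ⟨i, rfl⟩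
    have himg : (univ.filter fun w => gdeg G w = gdeg G (u i))
        = (univ.filter fun j : Fin n => gdeg G (u j) = gdeg G (u i)).image u := by
      ext w
      simp only [mem_filter, mem_univ, true_and, mem_image]
      constructor
      · intro hw
        have hwr : w ∈ Set.range u := (hspine w).mp (by rw [hw]; exact hne)
        obtain ⟨j, rfl⟩ := hwr
        exact ⟨j, hw, rfl⟩
      · rintro ⟨j, hj, rfl⟩
        exact hj
    rw [himg, Finset.card_image_of_injective _ hinj]
  rw [hLeq, curlingNumber]
  apply le_antisymm
  · apply Finset.sup_le
    intro v _
    by_cases hv : gdeg G v = 1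
    · rw [hclass_leaf v hv]
      exact le_max_right _ _
    · obtain ⟨i, rfl⟩ := (hspine v).mp hv
      rw [hclass_spine i]
      exact le_trans (Finset.le_sup (f := fun i : Fin n =>
        (univ.filter fun j : Fin n => gdeg G (u j) = gdeg G (u i)).card)
        (mem_univ i)) (le_max_left _ _)
  · apply max_le
    · apply Finset.sup_le
      intro i _
      rw [← hclass_spine i]
      exact Finset.le_sup (f := fun v =>
        (univ.filter fun w => gdeg G w = gdeg G v).card) (mem_univ (u i))
    · rcases Nat.eq_zero_or_pos L with h0 | hpos
      · simp [h0]
      · obtain ⟨v, hv⟩ := Finset.card_pos.mp (hL ▸ hpos)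
        have hv1 : gdeg G v = 1 := (mem_filter.mp hv).2
        rw [← hclass_leaf v hv1]
        exact Finset.le_sup (f := fun v =>
          (univ.filter fun w => gdeg G w = gdeg G v).card) (mem_univ v)
end
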